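/- Let ℓ^i and ℓ^j be two infinite needles with parameters (x^i,d^i) and (x^j,d^j), p ≥ 1, r > 0, and ε > 0. Suppose there exist v^0 in R^3 and nonnegative scalars v^3, v^6 with: (x^i - x^j)·v^0 + r v^3 + r v^6 ≤ -ε; (d^i)·v^0 = 0; (d^j)·v^0 = 0; ||v^0||_q ≤ v^3; ||v^0||_q ≤ v^6, where 1/p + 1/q = 1. Then the infinite needles do not intersect: { x^i + τ d^i + ρ : τ in R, ||ρ||_p ≤ r } ∩ { x^j + τ d^j + ρ : τ in R, ||ρ||_p ≤ r } = ∅. -/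

import Mathlib

open scoped ENNReal

/-- The `p`-norm of a vector in ℝ³, with `p = ∞` allowed. -/
noncomputable def pnorm (p : ℝ≥0∞) (v : Fin 3 → ℝ) : ℝ :=
  if p = ⊤ then max (max |v 0| |v 1|) |v 2|
  else (∑ i, |v i| ^ p.toReal) ^ (1 / p.toReal)

/-- The infinite needle with reference point `x`, direction `d`, radius `r`, norm order `p`. -/
def infNeedle (p : ℝ≥0∞) (r : ℝ) (x d : Fin 3 → ℝ) : Set (Fin 3 → ℝ) :=
  {χ | ∃ τ : ℝ, ∃ ρ, pnorm p ρ ≤ r ∧ χ = x + τ • d + ρ}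

/-- Euclidean inner product on ℝ³. -/
def dot (v w : Fin 3 → ℝ) : ℝ :=
  ∑ i, v i * w i

/-!
The functional `χ ↦ χ ⬝ v⁰` is constant along the axis of each needle because `v⁰` is orthogonal to
both directions, and by Hölder's inequality it moves by at most `r ‖v⁰‖_q` over a cross-section.
So each needle lies in a slab `|χ ⬝ v⁰ - x ⬝ v⁰| ≤ r ‖v⁰‖_q`, and the hypothesis on `(xⁱ - xʲ) ⬝ v⁰`
says exactly that the two slabs are disjoint.
-/

namespace PiLp

variable {ι : Type*} [Fintype ι]

theorem abs_sum_mul_le_norm_top_mul_norm_one (f : PiLp ∞ (fun _ : ι => ℝ))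
    (g : PiLp 1 (fun _ : ι => ℝ)) : |∑ i, f i * g i| ≤ ‖f‖ * ‖g‖ :=
  calc |∑ i, f i * g i| ≤ ∑ i, |f i| * |g i| := by
        simpa only [← abs_mul] using Finset.abs_sum_le_sum_abs _ _
    _ ≤ ∑ i, ‖f‖ * |g i| := by gcongr with i; exact norm_apply_le f i
    _ = ‖f‖ * ‖g‖ := by simp only [← Finset.mul_sum, norm_eq_of_L1, Real.norm_eq_abs]

theorem abs_sum_mul_le_norm_mul_norm {p q : ℝ≥0∞} [p.HolderConjugate q]
    (f : PiLp p (fun _ : ι => ℝ)) (g : PiLp q (fun _ : ι => ℝ)) :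
    |∑ i, f i * g i| ≤ ‖f‖ * ‖g‖ := by
  by_cases hp : p = ∞
  · subst hp
    obtain rfl : q = 1 := (ENNReal.HolderConjugate.eq_top_iff_eq_one ∞ q).1 rfl
    exact abs_sum_mul_le_norm_top_mul_norm_one f g
  by_cases hq : q = ∞
  · subst hq
    obtain rfl : p = 1 := (ENNReal.HolderConjugate.eq_top_iff_eq_one ∞ p).1 rfl
    simpa only [mul_comm] using abs_sum_mul_le_norm_top_mul_norm_one g f
  have hpq := ENNReal.HolderConjugate.toReal_of_ne_top hp hq
  calc |∑ i, f i * g i| ≤ ∑ i, |f i| * |g i| := by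
        simpa only [← abs_mul] using Finset.abs_sum_le_sum_abs _ _
    _ ≤ ‖f‖ * ‖g‖ := by
        simpa only [norm_eq_sum hpq.pos, norm_eq_sum hpq.symm.pos, Real.norm_eq_abs, abs_abs]
          using Real.inner_le_Lp_mul_Lq Finset.univ (fun i => |f i|) (fun i => |g i|) hpq

end PiLp

theorem pnorm_eq_norm_toLp {p : ℝ≥0∞} (hp : p ≠ 0) (v : Fin 3 → ℝ) :
    pnorm p v = ‖WithLp.toLp p v‖ := by
  by_cases hpt : p = ∞
  · subst hpt
    simp [pnorm, Pi.norm_def, Fin.univ_succ, max_assoc]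
  · simp only [pnorm, if_neg hpt, PiLp.norm_eq_sum (ENNReal.toReal_pos hp hpt), Real.norm_eq_abs]

theorem pnorm_nonneg (p : ℝ≥0∞) (v : Fin 3 → ℝ) : 0 ≤ pnorm p v := by
  unfold pnorm
  split_ifs <;> positivity

theorem dot_eq_dotProduct (v w : Fin 3 → ℝ) : dot v w = v ⬝ᵥ w := rfl

section HolderConjugate

variable {p q : ℝ≥0∞} [p.HolderConjugate q]

theorem abs_dot_le_pnorm_mul_pnorm (a b : Fin 3 → ℝ) :
    |dot a b| ≤ pnorm p a * pnorm q b := by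
  rw [pnorm_eq_norm_toLp (ENNReal.HolderConjugate.ne_zero p q),
    pnorm_eq_norm_toLp (ENNReal.HolderConjugate.ne_zero q p)]
  exact PiLp.abs_sum_mul_le_norm_mul_norm (WithLp.toLp p a) (WithLp.toLp q b)

theorem abs_dot_sub_le_of_mem_infNeedle {r : ℝ} {x d v χ : Fin 3 → ℝ} (hd : dot d v = 0)
    (hχ : χ ∈ infNeedle p r x d) : |dot χ v - dot x v| ≤ r * pnorm q v := by
  obtain ⟨τ, ρ, hρ, rfl⟩ := hχ
  have hshift : dot (x + τ • d + ρ) v - dot x v = dot ρ v := by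
    simp only [dot_eq_dotProduct, add_dotProduct, smul_dotProduct] at hd ⊢
    simp [hd]
  calc |dot (x + τ • d + ρ) v - dot x v| = |dot ρ v| := by rw [hshift]
    _ ≤ pnorm p ρ * pnorm q v := abs_dot_le_pnorm_mul_pnorm ρ v
    _ ≤ r * pnorm q v := mul_le_mul_of_nonneg_right hρ (pnorm_nonneg q v)

end HolderConjugate

theorem infinite_needles_disjoint_general (p q : ℝ≥0∞)
    (hpq : 1 / p + 1 / q = 1) (r : ℝ) (hr : 0 < r) (ε : ℝ) (hε : 0 < ε)
    (xi di xj dj : Fin 3 → ℝ) (v0 : Fin 3 → ℝ) (v3 v6 : ℝ)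
    (hineq : dot (xi - xj) v0 + r * v3 + r * v6 ≤ -ε)
    (heqi : dot di v0 = 0) (heqj : dot dj v0 = 0)
    (hcone3 : pnorm q v0 ≤ v3) (hcone6 : pnorm q v0 ≤ v6) :
    infNeedle p r xi di ∩ infNeedle p r xj dj = ∅ := by
  have : p.HolderConjugate q := ENNReal.holderConjugate_iff.2 (by simpa only [one_div] using hpq)
  refine Set.eq_empty_of_forall_notMem fun χ ⟨hχi, hχj⟩ => ?_
  have hi := abs_le.1 ((abs_dot_sub_le_of_mem_infNeedle heqi hχi).trans
    (mul_le_mul_of_nonneg_left hcone3 hr.le))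
  have hj := abs_le.1 ((abs_dot_sub_le_of_mem_infNeedle heqj hχj).trans
    (mul_le_mul_of_nonneg_left hcone6 hr.le))
  have hsub : dot (xi - xj) v0 = dot xi v0 - dot xj v0 := sub_dotProduct xi xj v0
  linarith [hi.1, hj.2]

theorem infinite_needles_disjoint (p q : ℝ≥0∞) (hp : 1 ≤ p) (hq : 1 ≤ q)
    (hpq : 1 / p + 1 / q = 1) (r : ℝ) (hr : 0 < r) (ε : ℝ) (hε : 0 < ε)
    (xi di xj dj : Fin 3 → ℝ) (v0 : Fin 3 → ℝ) (v3 v6 : ℝ)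
    (hv3 : 0 ≤ v3) (hv6 : 0 ≤ v6)
    (hineq : dot (xi - xj) v0 + r * v3 + r * v6 ≤ -ε)
    (heqi : dot di v0 = 0) (heqj : dot dj v0 = 0)
    (hcone3 : pnorm q v0 ≤ v3) (hcone6 : pnorm q v0 ≤ v6) :
    infNeedle p r xi di ∩ infNeedle p r xj dj = ∅ :=
  infinite_needles_disjoint_general p q hpq r hr ε hε xi di xj dj v0 v3 v6 hineq heqi heqj hcone3
    hcone6
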